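/- Let L ≥ K ≥ 1 and d ≥ 1 be integers, let x : [L] → ℝ^d and β ∈ ℝ^d be such that w(i) := x(i)ᵀβ ∈ [0, 1] for all i and w(1) ≥ w(2) ≥ … ≥ w(L). Let ψ̂, ρ ∈ ℝ^d and g, h : [L] → ℝ satisfy |x(i)ᵀψ̂ − x(i)ᵀβ| ≤ g(i) and |x(i)ᵀρ − x(i)ᵀψ̂| ≤ h(i) for all i ∈ [L], and suppose Σ_{k=1}^K [∏_{j=1}^{k−1} (1 − w(j))] · x(k)ᵀρ ≥ Σ_{k=1}^K [∏_{j=1}^{k−1} (1 − w(j))] · w(k). If S = (i_1, …, i_K) are distinct items with x(i_1)ᵀρ ≥ x(i_2)ᵀρ ≥ … ≥ x(i_K)ᵀρ ≥ x(j)ᵀρ for every j ∉ S, then Σ_{k=1}^K [∏_{j=1}^{k−1} (1 − w(i_j))] · (g(i_k) + h(i_k)) ≥ r(S* | w) − r(S | w), where S* = (1, …, K). -/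

import Mathlib

/-!
Write both rewards in cascade form `1 - ∏ₖ (1 - aₖ) = ∑ₖ Pₖ aₖ`, with prefix products `P*ₖ` along
`S*` and `Pₖ` along `S`. As `w` is sorted, the first `k` items of `S*` minimise the product of
`1 - w` over `k` items, so `P*ₖ ≤ Pₖ`. The crucial inequality bounds `r(S*)` by `∑ P*ₖ u(k)` with
`u = xᵀρ`; the greedy list maximises every prefix sum of `u` and `P*` is nonincreasing, so Abel
summation gives `∑ P*ₖ u(k) ≤ ∑ P*ₖ u(iₖ)`. Termwise, `|u - w| ≤ g + h` then yields
`P*ₖ u(iₖ) - Pₖ w(iₖ) ≤ Pₖ (g + h)(iₖ)`.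
-/

open Finset

theorem mul_sub_mul_le_mul_of_abs_sub_le {R : Type*} [CommRing R] [LinearOrder R]
    [IsStrictOrderedRing R] {a b u v e : R} (ha : 0 ≤ a) (hab : a ≤ b) (hv : 0 ≤ v)
    (huv : |u - v| ≤ e) : a * u - b * v ≤ b * e :=
  calc a * u - b * v ≤ a * u - a * v := sub_le_sub_left (mul_le_mul_of_nonneg_right hab hv) _
    _ = a * (u - v) := (mul_sub a u v).symm
    _ ≤ a * e := mul_le_mul_of_nonneg_left ((le_abs_self _).trans huv) ha
    _ ≤ b * e := mul_le_mul_of_nonneg_right hab ((abs_nonneg _).trans huv)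

namespace Finset

variable {ι : Type*}

theorem one_sub_prod_one_sub_eq_sum {R : Type*} [CommRing R] [Fintype ι] [LinearOrder ι]
    [LocallyFiniteOrderBot ι] (f : ι → R) :
    1 - ∏ i, (1 - f i) = ∑ i, (∏ j ∈ Iio i, (1 - f j)) * f i := by
  rw [prod_one_sub_ordered, sub_sub_cancel]
  refine sum_congr rfl fun i _ => ?_
  rw [mul_comm, filter_gt_eq_Iio]

theorem antitone_prod_Iio_one_sub {R : Type*} [CommRing R] [PartialOrder R] [IsOrderedRing R]
    [Preorder ι] [LocallyFiniteOrderBot ι] {f : ι → R} (hf0 : ∀ i, 0 ≤ f i) (hf1 : ∀ i, f i ≤ 1) :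
    Antitone fun i => ∏ j ∈ Iio i, (1 - f j) := fun _ _ hij =>
  prod_le_prod_of_subset_of_le_one (Iio_subset_Iio hij) (fun j _ => sub_nonneg.2 (hf1 j))
    fun j _ _ => sub_le_self 1 (hf0 j)

theorem sum_mul_nonneg_of_antitoneOn {R : Type*} [CommRing R] [PartialOrder R] [IsOrderedRing R]
    [LinearOrder ι] (s : Finset ι) {c b : ι → R} (hc : AntitoneOn c s) (hc0 : ∀ i ∈ s, 0 ≤ c i)
    (hb : ∀ i ∈ s, 0 ≤ ∑ j ∈ s with j ≤ i, b j) :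
    0 ≤ ∑ i ∈ s, c i * b i := by
  induction s using Finset.induction_on_max generalizing c with
  | empty => simp
  | insert a s hlt ih =>
    have ha : a ∉ s := fun h => lt_irrefl a (hlt a h)
    have hprefix : ∀ i ∈ s, (insert a s).filter (· ≤ i) = s.filter (· ≤ i) := by
      intro i hi
      rw [filter_insert, if_neg (not_le.2 (hlt i hi))]
    have hrest : 0 ≤ ∑ i ∈ s, (c i - c a) * b i := by
      refine ih (fun i hi j hj hij => sub_le_sub_right (hc (mem_insert_of_mem hi)
        (mem_insert_of_mem hj) hij) _) (fun i hi => sub_nonneg.2 (hc (mem_insert_of_mem hi)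
        (mem_insert_self a s) (hlt i hi).le)) fun i hi => ?_
      rw [← hprefix i hi]
      exact hb i (mem_insert_of_mem hi)
    have htotal : 0 ≤ ∑ i ∈ insert a s, b i := by
      have := hb a (mem_insert_self a s)
      rwa [filter_true_of_mem fun i hi => ?_] at this
      rcases mem_insert.1 hi with rfl | hi
      · exact le_rfl
      · exact (hlt i hi).le
    have hsplit : ∑ i ∈ insert a s, c i * b i
        = ∑ i ∈ s, (c i - c a) * b i + c a * ∑ i ∈ insert a s, b i := by
      simp only [sum_insert ha, sub_mul, sum_sub_distrib, mul_add, mul_sum]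
      ring
    rw [hsplit]
    exact add_nonneg hrest (mul_nonneg (hc0 a (mem_insert_self a s)) htotal)

variable {α : Type*} [DecidableEq α]

theorem sum_le_sum_of_card_eq_of_separated {M : Type*} [AddCommMonoid M] [PartialOrder M]
    [IsOrderedAddMonoid M] {s t : Finset α} (hst : #t = #s) {f : α → M} (c : M)
    (hs : ∀ a ∈ s, c ≤ f a) (ht : ∀ a ∉ s, f a ≤ c) :
    ∑ a ∈ t, f a ≤ ∑ a ∈ s, f a := by
  calc ∑ a ∈ t, f a ≤ ∑ a ∈ t ∩ s, f a + #(t \ s) • c := by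
        rw [← sum_inter_add_sum_sdiff t s]
        gcongr
        exact sum_le_card_nsmul _ _ _ fun a ha => ht a (mem_sdiff.1 ha).2
    _ = ∑ a ∈ s ∩ t, f a + #(s \ t) • c := by rw [inter_comm, card_sdiff_comm hst]
    _ ≤ ∑ a ∈ s, f a := by
        rw [← sum_inter_add_sum_sdiff s t]
        gcongr
        exact card_nsmul_le_sum _ _ _ fun a ha => hs a (mem_sdiff.1 ha).1

theorem prod_le_prod_of_card_eq_of_separated {R : Type*} [CommSemiring R] [PartialOrder R]
    [IsOrderedRing R] {s t : Finset α} (hst : #s = #t) {f : α → R} {c : R} (hc : 0 ≤ c)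
    (hf : ∀ a ∈ s, 0 ≤ f a) (hs : ∀ a ∈ s, f a ≤ c) (ht : ∀ a ∉ s, c ≤ f a) :
    ∏ a ∈ s, f a ≤ ∏ a ∈ t, f a := by
  have hts : ∀ a ∈ t \ s, c ≤ f a := fun a ha => ht a (mem_sdiff.1 ha).2
  calc ∏ a ∈ s, f a = (∏ a ∈ s ∩ t, f a) * ∏ a ∈ s \ t, f a :=
        (prod_inter_mul_prod_sdiff s t f).symm
    _ ≤ (∏ a ∈ s ∩ t, f a) * ∏ _a ∈ s \ t, c :=
        mul_le_mul_of_nonneg_left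
          (prod_le_prod (fun a ha => hf a (mem_sdiff.1 ha).1) fun a ha => hs a (mem_sdiff.1 ha).1)
          (prod_nonneg fun a ha => hf a (mem_inter.1 ha).1)
    _ = (∏ a ∈ t ∩ s, f a) * ∏ _a ∈ t \ s, c := by
        rw [prod_const, prod_const, inter_comm, card_sdiff_comm hst]
    _ ≤ (∏ a ∈ t ∩ s, f a) * ∏ a ∈ t \ s, f a :=
        mul_le_mul_of_nonneg_left (prod_le_prod (fun _ _ => hc) hts)
          (prod_nonneg fun a ha => hf a (mem_inter.1 ha).2)
    _ = ∏ a ∈ t, f a := prod_inter_mul_prod_sdiff t s f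

end Finset

theorem prod_Iio_one_sub_castLE_le {L K : ℕ} (hKL : K ≤ L) {w : Fin L → ℝ} (hw1 : ∀ a, w a ≤ 1)
    (hw : Antitone w) {i : Fin K → Fin L} (hi : Function.Injective i) (n : Fin K) :
    ∏ j ∈ Iio n, (1 - w (Fin.castLE hKL j)) ≤ ∏ j ∈ Iio n, (1 - w (i j)) := by
  rw [← prod_image (f := fun a => 1 - w a) (Fin.castLE_injective hKL).injOn,
    ← prod_image (f := fun a => 1 - w a) hi.injOn]
  refine prod_le_prod_of_card_eq_of_separated
    (by rw [card_image_of_injective _ hi, card_image_of_injective _ (Fin.castLE_injective hKL)])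
    (sub_nonneg.2 (hw1 (Fin.castLE hKL n))) (fun a _ => sub_nonneg.2 (hw1 a)) ?_ ?_
  · simp only [mem_image, mem_Iio]
    rintro _ ⟨j, hj, rfl⟩
    exact sub_le_sub_left (hw hj.le) 1
  · intro a ha
    refine sub_le_sub_left (hw ?_) 1
    by_contra! hlt
    exact ha (mem_image.2 ⟨⟨a, (Fin.lt_def.1 hlt).trans n.isLt⟩, mem_Iio.2 hlt, rfl⟩)

section Greedy

variable {ι α : Type*} [LinearOrder ι] [LocallyFiniteOrderBot ι] [DecidableEq α] {u : α → ℝ}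
  {i j : ι → α}

theorem sum_Iic_comp_le_of_greedy (hi : Function.Injective i) (hj : Function.Injective j)
    (hsort : Antitone (u ∘ i)) (htop : ∀ a ∉ Set.range i, ∀ k, u a ≤ u (i k)) (n : ι) :
    ∑ k ∈ Iic n, u (j k) ≤ ∑ k ∈ Iic n, u (i k) := by
  rw [← sum_image (f := u) hj.injOn, ← sum_image (f := u) hi.injOn]
  refine sum_le_sum_of_card_eq_of_separated
    (by rw [card_image_of_injective _ hi, card_image_of_injective _ hj]) (u (i n)) ?_ ?_
  · simp only [mem_image, mem_Iic]
    rintro _ ⟨k, hk, rfl⟩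
    exact hsort hk
  · intro a ha
    by_cases hrange : a ∈ Set.range i
    · obtain ⟨l, rfl⟩ := hrange
      exact hsort (le_of_not_ge fun hl => ha (mem_image_of_mem i (mem_Iic.2 hl)))
    · exact htop a hrange n

theorem sum_mul_comp_le_of_greedy [Fintype ι] {c : ι → ℝ} (hc : Antitone c) (hc0 : ∀ k, 0 ≤ c k)
    (hi : Function.Injective i) (hj : Function.Injective j) (hsort : Antitone (u ∘ i))
    (htop : ∀ a ∉ Set.range i, ∀ k, u a ≤ u (i k)) :
    ∑ k, c k * u (j k) ≤ ∑ k, c k * u (i k) := by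
  have := sum_mul_nonneg_of_antitoneOn univ (hc.antitoneOn _) (fun k _ => hc0 k)
    (b := fun k => u (i k) - u (j k)) fun n _ => by
      rw [filter_ge_eq_Iic, sum_sub_distrib, sub_nonneg]
      exact sum_Iic_comp_le_of_greedy hi hj hsort htop n
  simpa only [mul_sub, sum_sub_distrib, sub_nonneg] using this

end Greedy

/-- Linear-cascading analogue of Lemma transfer-one. Items are `Fin L` with
feature vectors `x i ∈ ℝ^d`, weights `w i = x(i)ᵀ β ∈ [0,1]` nonincreasing; `S* = (0, …, K-1)`.
If `|x(i)ᵀψ̂ - x(i)ᵀβ| ≤ g i`, `|x(i)ᵀρ - x(i)ᵀψ̂| ≤ h i`, the weighted crucial inequality holds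
for the top `K` items, and `S = (i 0, …, i (K-1))` is the greedy list ordered by `x(·)ᵀρ`, then
`∑_k [∏_{j<k} (1 - w(i_j))] (g(i_k) + h(i_k)) ≥ r(S*|w) - r(S|w)`. -/
theorem stmt_16 (L K d : ℕ) (hK : 1 ≤ K) (hKL : K ≤ L)
    (x : Fin L → Fin d → ℝ) (β : Fin d → ℝ)
    (w : Fin L → ℝ) (hw : ∀ i, w i = dotProduct (x i) β)
    (hw01 : ∀ i, 0 ≤ w i ∧ w i ≤ 1)
    (hmono : ∀ a b : Fin L, a ≤ b → w b ≤ w a)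
    (ψ ρ : Fin d → ℝ) (g h : Fin L → ℝ)
    (hg : ∀ i, |dotProduct (x i) ψ - dotProduct (x i) β| ≤ g i)
    (hh : ∀ i, |dotProduct (x i) ρ - dotProduct (x i) ψ| ≤ h i)
    (hcrucial :
      ∑ k : Fin K, (∏ j ∈ Finset.Iio k, (1 - w (Fin.castLE hKL j))) * w (Fin.castLE hKL k)
      ≤ ∑ k : Fin K, (∏ j ∈ Finset.Iio k, (1 - w (Fin.castLE hKL j)))
          * dotProduct (x (Fin.castLE hKL k)) ρ)
    (i : Fin K → Fin L) (hi : Function.Injective i)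
    (hsort : ∀ k l : Fin K, k ≤ l →
      dotProduct (x (i l)) ρ ≤ dotProduct (x (i k)) ρ)
    (htop : ∀ j : Fin L, j ∉ Set.range i →
      dotProduct (x j) ρ ≤ dotProduct (x (i ⟨K - 1, by omega⟩)) ρ) :
    (1 - ∏ k : Fin K, (1 - w (Fin.castLE hKL k))) - (1 - ∏ k : Fin K, (1 - w (i k)))
      ≤ ∑ k : Fin K, (∏ j ∈ Finset.Iio k, (1 - w (i j))) * (g (i k) + h (i k)) := by
  set u : Fin L → ℝ := fun j => dotProduct (x j) ρ
  have hw0 : ∀ a, 0 ≤ w a := fun a => (hw01 a).1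
  have hw1 : ∀ a, w a ≤ 1 := fun a => (hw01 a).2
  have hprefix : ∀ k, ∏ j ∈ Iio k, (1 - w (Fin.castLE hKL j)) ≤ ∏ j ∈ Iio k, (1 - w (i j)) :=
    prod_Iio_one_sub_castLE_le hKL hw1 hmono hi
  have hgreedy := sum_mul_comp_le_of_greedy
    (antitone_prod_Iio_one_sub (f := fun j => w (Fin.castLE hKL j)) (fun _ => hw0 _)
      fun _ => hw1 _)
    (fun k => prod_nonneg fun j _ => sub_nonneg.2 (hw1 _)) (u := u) hi
    (Fin.castLE_injective hKL) hsort
    fun a ha k => (htop a ha).trans (hsort k _ (Fin.le_def.2 (Nat.le_sub_one_of_lt k.isLt)))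
  have hdev : ∀ a, |u a - w a| ≤ g a + h a := fun a => by
    rw [hw]
    linarith [abs_sub_le (u a) (dotProduct (x a) ψ) (dotProduct (x a) β), hg a, hh a]
  rw [one_sub_prod_one_sub_eq_sum, one_sub_prod_one_sub_eq_sum]
  calc _ ≤ ∑ k, (∏ j ∈ Iio k, (1 - w (Fin.castLE hKL j))) * u (i k)
        - ∑ k, (∏ j ∈ Iio k, (1 - w (i j))) * w (i k) :=
        sub_le_sub_right (hcrucial.trans hgreedy) _
    _ ≤ _ := by
      rw [← sum_sub_distrib]
      exact sum_le_sum fun k _ => mul_sub_mul_le_mul_of_abs_sub_le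
        (prod_nonneg fun j _ => sub_nonneg.2 (hw1 _)) (hprefix k) (hw0 _) (hdev _)
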